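/- Let φ(x) = exp(−x) and γ(x) = 1 − (x−1)^2 for x < 1, γ(x) = 2(x−1)^2 + 1 for x ≥ 1. Fix r ∈ [1/3, 2/3] and define F(x) = r·γ(φ(x)) + (1−r)·γ(φ(−x)). Then F has a unique global minimizer at x = 0; moreover F is decreasing on (−∞, 0) and increasing on (0, ∞). -/

import Mathlib

/-!
For `x ≥ 0` put `t = exp x ≥ 1`; then `F(x) = r (1 - (1 - t⁻¹)²) + (1 - r) (2 (t - 1)² + 1)`.
Writing `X = (1 - t⁻¹)²` and `Y = (t - 1)²`, an increment of `F` is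
`2 (1 - r) (ΔY - ΔX) + (2 - 3r) ΔX`, and both `X` and `Y - X = (t - 1)² (1 - t⁻²)` increase on
`[1, ∞)`, so `F` increases on `[0, ∞)` as soon as `r ≤ 2/3`. The symmetry `F_r(-x) = F_{1-r}(x)`
turns this into decrease on `(-∞, 0]` for `r ≥ 1/3`.
-/

/-- The piecewise quadratic `γ` of the counterexample. -/
noncomputable def γc (x : ℝ) : ℝ := if x < 1 then 1 - (x - 1) ^ 2 else 2 * (x - 1) ^ 2 + 1

/-- `φ(x) = exp(−x)`. -/
noncomputable def φc (x : ℝ) : ℝ := Real.exp (-x)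

/-- `F(x) = r·γ(φ(x)) + (1−r)·γ(φ(−x))`. -/
noncomputable def Fc (r x : ℝ) : ℝ := r * γc (φc x) + (1 - r) * γc (φc (-x))

open Set Real

lemma γc_of_le_one {x : ℝ} (hx : x ≤ 1) : γc x = 1 - (x - 1) ^ 2 := by
  rcases hx.lt_or_eq with hx | rfl
  · simp [γc, hx]
  · norm_num [γc]

lemma γc_of_one_le {x : ℝ} (hx : 1 ≤ x) : γc x = 2 * (x - 1) ^ 2 + 1 := by
  simp [γc, not_lt.mpr hx]

lemma Fc_of_nonneg (r : ℝ) {x : ℝ} (hx : 0 ≤ x) :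
    Fc r x = r * (1 - (1 - (exp x)⁻¹) ^ 2) + (1 - r) * (2 * (exp x - 1) ^ 2 + 1) := by
  rw [Fc, φc, φc, neg_neg, γc_of_le_one (exp_le_one_iff.mpr (neg_nonpos.mpr hx)),
    γc_of_one_le (one_le_exp hx), exp_neg]
  ring

lemma Fc_neg (r x : ℝ) : Fc r (-x) = Fc (1 - r) x := by
  simp only [Fc, neg_neg]
  ring

lemma monotoneOn_one_sub_inv_sq : MonotoneOn (fun t : ℝ => (1 - t⁻¹) ^ 2) (Ici 1) := by
  intro a (ha : 1 ≤ a) b _ hab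
  have ha0 : 0 < a := lt_of_lt_of_le one_pos ha
  have : a⁻¹ ≤ 1 := inv_le_one_of_one_le₀ ha
  have : b⁻¹ ≤ a⁻¹ := inv_anti₀ ha0 hab
  dsimp only
  gcongr

lemma strictMonoOn_sq_sub_one_sub_sq_one_sub_inv :
    StrictMonoOn (fun t : ℝ => (t - 1) ^ 2 - (1 - t⁻¹) ^ 2) (Ici 1) := by
  intro a (ha : 1 ≤ a) b _ hab
  have ha0 : 0 < a := lt_of_lt_of_le one_pos ha
  have hfac : ∀ t : ℝ, 0 < t → (t - 1) ^ 2 - (1 - t⁻¹) ^ 2 = (t - 1) ^ 2 * (1 - (t ^ 2)⁻¹) := by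
    intro t ht
    field_simp
  simp only [hfac a ha0, hfac b (ha0.trans hab)]
  have : (a ^ 2)⁻¹ ≤ 1 := inv_le_one_of_one_le₀ (one_le_pow₀ ha)
  have : (b ^ 2)⁻¹ < 1 := inv_lt_one_of_one_lt₀ (one_lt_pow₀ (lt_of_le_of_lt ha hab) two_ne_zero)
  have : (b ^ 2)⁻¹ ≤ (a ^ 2)⁻¹ := inv_anti₀ (by positivity) (by gcongr)
  calc (a - 1) ^ 2 * (1 - (a ^ 2)⁻¹) ≤ (a - 1) ^ 2 * (1 - (b ^ 2)⁻¹) := by gcongr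
    _ < (b - 1) ^ 2 * (1 - (b ^ 2)⁻¹) := by gcongr

lemma Fc_strictMonoOn {r : ℝ} (hr : r ≤ 2 / 3) : StrictMonoOn (Fc r) (Ici 0) := by
  intro x hx y hy hxy
  have hA : exp x ∈ Ici 1 := one_le_exp hx
  have hAB : exp x < exp y := exp_lt_exp.mpr hxy
  have hB : exp y ∈ Ici 1 := hA.trans hAB.le
  have hX := monotoneOn_one_sub_inv_sq hA hB hAB.le
  have hYX := strictMonoOn_sq_sub_one_sub_sq_one_sub_inv hA hB hAB
  simp only at hX hYX
  rw [Fc_of_nonneg r hx, Fc_of_nonneg r hy]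
  nlinarith [mul_pos (by linarith : (0 : ℝ) < 1 - r) (sub_pos.mpr hYX),
    mul_nonneg (by linarith : (0 : ℝ) ≤ 2 - 3 * r) (sub_nonneg.mpr hX)]

lemma Fc_strictAntiOn {r : ℝ} (hr : 1 / 3 ≤ r) : StrictAntiOn (Fc r) (Iic 0) := by
  intro x (hx : x ≤ 0) y (hy : y ≤ 0) hxy
  have key : Fc (1 - r) (-y) < Fc (1 - r) (-x) :=
    Fc_strictMonoOn (by linarith) (neg_nonneg.mpr hy) (neg_nonneg.mpr hx) (neg_lt_neg hxy)
  simpa only [Fc_neg, sub_sub_cancel] using key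

/-- For `r ∈ [1/3, 2/3]`, the function `F` is strictly decreasing on `(−∞, 0]`, strictly
increasing on `[0, ∞)`, and has a unique global minimizer at `0`. -/
theorem Fc_unique_min (r : ℝ) (hr : r ∈ Set.Icc (1/3 : ℝ) (2/3)) :
    StrictAntiOn (Fc r) (Set.Iic 0) ∧ StrictMonoOn (Fc r) (Set.Ici 0) ∧
    ∀ x : ℝ, x ≠ 0 → Fc r 0 < Fc r x := by
  have hanti := Fc_strictAntiOn hr.1
  have hmono := Fc_strictMonoOn hr.2
  refine ⟨hanti, hmono, fun x hx => ?_⟩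
  rcases hx.lt_or_gt with hx | hx
  · exact hanti hx.le self_mem_Iic hx
  · exact hmono self_mem_Ici hx.le hx
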